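/- In the lexicographic product G·K_m with G connected of order n ≥ 2, if D is a solvable distribution on G of size at most 2m in which every vertex with exactly one pebble is 2-reachable and D(g) < 2m for every g, then the distribution Q on G·K_m defined by Q((g,0)) = 1 if D(g) is odd, Q((g,i)) = 2 for 1 ≤ i ≤ D(g)/2, and 0 otherwise, is a solvable 2-restricted distribution with |Q| = |D|. -/

import Mathlib

open Finset

/-- A single pebbling move: remove two pebbles from `u` and place one on an
adjacent vertex `v`. -/
def PebblingStep {V : Type*} [DecidableEq V] (G : SimpleGraph V) (D D' : V → ℕ) : Prop :=
  ∃ u v, G.Adj u v ∧ 2 ≤ D u ∧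
    D' = Function.update (Function.update D u (D u - 2)) v (D v + 1)

/-- `D'` is obtained from `D` by an executable sequence of pebbling moves. -/
def PebblingReaches {V : Type*} [DecidableEq V] (G : SimpleGraph V) : (V → ℕ) → (V → ℕ) → Prop :=
  Relation.ReflTransGen (PebblingStep G)

/-- A vertex `v` is `k`-reachable under `D`. -/
def KReachable {V : Type*} [DecidableEq V] (G : SimpleGraph V) (D : V → ℕ) (k : ℕ) (v : V) : Prop :=
  ∃ D', PebblingReaches G D D' ∧ k ≤ D' v

/-- A distribution is solvable if every vertex is (1-)reachable. -/
def Solvable {V : Type*} [DecidableEq V] (G : SimpleGraph V) (D : V → ℕ) : Prop :=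
  ∀ v, KReachable G D 1 v

/-- The size of a pebble distribution. -/
def distSize {V : Type*} [Fintype V] (D : V → ℕ) : ℕ := ∑ v, D v

/-- The optimal pebbling number `π*`. -/
noncomputable def optPebbling {V : Type*} [Fintype V] [DecidableEq V] (G : SimpleGraph V) : ℕ :=
  sInf {n | ∃ D : V → ℕ, Solvable G D ∧ distSize D = n}

/-- The `t`-restricted optimal pebbling number `π*_t`. -/
noncomputable def optPebblingRes {V : Type*} [Fintype V] [DecidableEq V]
    (G : SimpleGraph V) (t : ℕ) : ℕ :=
  sInf {n | ∃ D : V → ℕ, (∀ v, D v ≤ t) ∧ Solvable G D ∧ distSize D = n}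

/-- The lexicographic product of two simple graphs. -/
def lexProd {V W : Type*} (G : SimpleGraph V) (H : SimpleGraph W) : SimpleGraph (V × W) where
  Adj a b := G.Adj a.1 b.1 ∨ (a.1 = b.1 ∧ H.Adj a.2 b.2)
  symm := by
    constructor
    rintro a b (h | ⟨h1, h2⟩)
    · exact Or.inl h.symm
    · exact Or.inr ⟨h1.symm, h2.symm⟩
  loopless := by
    constructor
    rintro a (h | ⟨_, h2⟩)
    · exact G.irrefl h
    · exact H.irrefl h2

/-!
Keep the lifted distribution in a normal form: the `D g` pebbles of a vertex `g` sit in the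
fibre `{g} × K_m` as pairs plus at most one single pebble. A pebbling move `u → v` of `G` lifts
to a move that takes a pair from the fibre over `u` and drops its pebble on the single of the
fibre over `v`, or on an empty vertex of that fibre if it has no single; since `D u ≥ 2` and
`|D| ≤ 2m`, the fibre over `v` is not full. So every pebbling sequence of `G` is mirrored in
`G·K_m` with the normal form kept. To reach `(g, i)`: if `g` can get two pebbles (at once, or
after some moves when `D g = 1`), a pair appears in its fibre and one pebble is moved inside the clique to `(g, i)`.
If `D g = 0`, some vertex `(g, k)` can be reached; the fibre over `g` starts empty, so the
automorphism of `G·K_m` swapping `(g, k)` and `(g, i)` fixes the lifted distribution, and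
`(g, i)` can be reached as well.
-/

open Function

theorem sum_update_add_apply_self {α M : Type*} [Fintype α] [DecidableEq α] [AddCommMonoid M]
    (f : α → M) (a : α) (b : M) : ∑ x, update f a b x + f a = ∑ x, f x + b := by
  rw [sum_update_of_mem (mem_univ a), Fintype.sum_eq_add_sum_compl a, compl_eq_univ_sdiff]
  abel

section Pebbling

variable {V V' : Type*} [DecidableEq V] [DecidableEq V'] {G : SimpleGraph V} {G' : SimpleGraph V'}
  {D D' : V → ℕ}

theorem PebblingStep.distSize_add_one [Fintype V] (h : PebblingStep G D D') :
    distSize D' + 1 = distSize D := by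
  obtain ⟨u, v, huv, hu, rfl⟩ := h
  have h₁ := sum_update_add_apply_self (update D u (D u - 2)) v (D v + 1)
  have h₂ := sum_update_add_apply_self D u (D u - 2)
  rw [update_of_ne huv.ne.symm] at h₁
  unfold distSize
  omega

theorem PebblingReaches.distSize_le [Fintype V] (h : PebblingReaches G D D') :
    distSize D' ≤ distSize D := by
  induction h with
  | refl => exact le_rfl
  | tail _ hstep ih => exact (Nat.le.intro hstep.distSize_add_one).trans ih

theorem PebblingStep.comp_iso (σ : G' ≃g G) (h : PebblingStep G D D') :
    PebblingStep G' (D ∘ σ) (D' ∘ σ) := by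
  obtain ⟨u, v, huv, hu, rfl⟩ := h
  refine ⟨σ.symm u, σ.symm v, σ.symm.map_adj_iff.2 huv, by simpa using hu, ?_⟩
  ext x
  simp [update_apply, RelIso.eq_symm_apply]

theorem PebblingReaches.comp_iso (σ : G' ≃g G) (h : PebblingReaches G D D') :
    PebblingReaches G' (D ∘ σ) (D' ∘ σ) :=
  h.lift (· ∘ σ) fun _ _ => PebblingStep.comp_iso σ

theorem KReachable.comp_iso (σ : G' ≃g G) {k : ℕ} {v : V} (h : KReachable G D k v) :
    KReachable G' (D ∘ σ) k (σ.symm v) :=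
  let ⟨D', hr, hk⟩ := h
  ⟨D' ∘ σ, hr.comp_iso σ, by simpa using hk⟩

theorem KReachable.of_pebblingReaches (h : PebblingReaches G D D') {k : ℕ} {v : V}
    (h' : KReachable G D' k v) : KReachable G D k v :=
  let ⟨D'', hr, hk⟩ := h'
  ⟨D'', h.trans hr, hk⟩

end Pebbling

def lexProdFiberIso {V W : Type*} (G : SimpleGraph V) {H : SimpleGraph W} (τ : V → H ≃g H) :
    lexProd G H ≃g lexProd G H where
  toEquiv := Equiv.prodShear (Equiv.refl V) fun x => (τ x).toEquiv
  map_rel_iff' := by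
    rintro ⟨x, w⟩ ⟨y, w'⟩
    refine or_congr_right (and_congr_right ?_)
    rintro (rfl : x = y)
    exact (τ x).map_adj_iff

theorem lexProdFiberIso_apply {V W : Type*} (G : SimpleGraph V) {H : SimpleGraph W}
    (τ : V → H ≃g H) (p : V × W) : lexProdFiberIso G τ p = (p.1, τ p.1 p.2) := rfl

section Packing

variable {W : Type*}

def IsPairPacked (c : W → ℕ) : Prop :=
  (∀ j, c j ≤ 2) ∧ ∀ j k, c j = 1 → c k = 1 → j = k

namespace IsPairPacked

variable {c : W → ℕ}

theorem exists_eq_two [Fintype W] (hc : IsPairPacked c) (h : 2 ≤ ∑ j, c j) : ∃ j, c j = 2 := by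
  by_contra! hne
  have hle : ∀ j, c j ≤ 1 := fun j => by have := hc.1 j; have := hne j; omega
  by_cases hone : ∃ j, c j = 1
  · obtain ⟨j₀, hj₀⟩ := hone
    have hsingle : ∀ j, j ≠ j₀ → c j = 0 := fun j hj => by
      have := hle j
      by_contra
      exact hj (hc.2 j j₀ (by omega) hj₀)
    rw [sum_eq_single j₀ (fun j _ => hsingle j) (by simp)] at h
    omega
  · push Not at hone
    rw [sum_eq_zero fun j _ => by have := hle j; have := hone j; omega] at h
    omega

theorem update_zero [DecidableEq W] (hc : IsPairPacked c) (j : W) :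
    IsPairPacked (update c j 0) := by
  refine ⟨fun k => ?_, fun k l => ?_⟩
  · rw [update_apply]; split_ifs <;> first | omega | exact hc.1 k
  · simp only [update_apply]
    split_ifs <;> intro h₁ h₂ <;> first | exact hc.2 k l h₁ h₂ | simp_all

theorem exists_update_succ [Fintype W] [DecidableEq W] (hc : IsPairPacked c)
    (h : ∑ j, c j < 2 * Fintype.card W) : ∃ k, IsPairPacked (update c k (c k + 1)) := by
  obtain ⟨k, hk, hk'⟩ : ∃ k, c k ≤ 1 ∧ (c k = 1 ∨ ∀ j, c j ≠ 1) := by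
    by_cases hone : ∃ k, c k = 1
    · obtain ⟨k, hk⟩ := hone
      exact ⟨k, hk.le, .inl hk⟩
    · push Not at hone
      obtain ⟨k, hk⟩ : ∃ k, c k = 0 := by
        by_contra! hpos
        have hall : ∀ j, c j = 2 := fun j => by
          have := hc.1 j; have := hpos j; have := hone j; omega
        simp [hall, mul_comm] at h
      exact ⟨k, by omega, .inr hone⟩
  refine ⟨k, fun j => ?_, fun j l => ?_⟩
  · rw [update_apply]; split_ifs <;> first | omega | exact hc.1 j
  · simp only [update_apply]
    split_ifs with hj hl hl <;> intro h₁ h₂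
    · exact hj.trans hl.symm
    · exact absurd h₂ (hk'.resolve_left (by omega) l)
    · exact absurd h₁ (hk'.resolve_left (by omega) j)
    · exact hc.2 j l h₁ h₂

end IsPairPacked

variable {V : Type*} [Fintype W]

def IsPairPackingOf (Q : V × W → ℕ) (D : V → ℕ) : Prop :=
  ∀ g, IsPairPacked (curry Q g) ∧ ∑ j, Q (g, j) = D g

namespace IsPairPackingOf

variable {Q : V × W → ℕ} {D : V → ℕ}

theorem distSize_eq [Fintype V] (h : IsPairPackingOf Q D) : distSize Q = distSize D := by
  rw [distSize, distSize, Fintype.sum_prod_type]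
  exact sum_congr rfl fun g _ => (h g).2

theorem update [DecidableEq V] [DecidableEq W] (h : IsPairPackingOf Q D) {g : V} {j : W} {b : ℕ}
    (hc : IsPairPacked (Function.update (curry Q g) j b)) :
    IsPairPackingOf (Function.update Q (g, j) b) (Function.update D g (D g + b - Q (g, j))) := by
  intro g'
  have hcol : curry (Function.update Q (g, j) b) g' =
      Function.update (curry Q) g (Function.update (curry Q g) j b) g' := by
    rw [curry_update]
  change IsPairPacked _ ∧ ∑ x, curry (Function.update Q (g, j) b) g' x = _
  rcases eq_or_ne g' g with rfl | hg
  · rw [update_self] at hcol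
    rw [hcol, update_self]
    refine ⟨hc, ?_⟩
    have hsum := sum_update_add_apply_self (curry Q g') j b
    have := (h g').2
    simp only [curry_apply] at hsum ⊢
    omega
  · rw [update_of_ne hg] at hcol
    rw [hcol, update_of_ne hg]
    exact h g'

theorem exists_pebblingStep [DecidableEq V] [DecidableEq W] [Fintype V] {G : SimpleGraph V}
    {D' : V → ℕ} (h : IsPairPackingOf Q D) (hsize : distSize D ≤ 2 * Fintype.card W)
    (hstep : PebblingStep G D D') :
    ∃ Q', PebblingStep (lexProd G ⊤) Q Q' ∧ IsPairPackingOf Q' D' := by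
  obtain ⟨u, v, huv, hu, rfl⟩ := hstep
  obtain ⟨j, hj : Q (u, j) = 2⟩ := (h u).1.exists_eq_two ((h u).2 ▸ hu)
  have hv : D v < 2 * Fintype.card W := by
    have := sum_le_sum_of_subset (f := D) (subset_univ {u, v})
    rw [sum_pair huv.ne] at this
    unfold distSize at hsize
    omega
  obtain ⟨k, hpk⟩ := (h v).1.exists_update_succ ((h v).2 ▸ hv)
  have huk : ((u, j) : V × W) ≠ (v, k) := fun h => huv.ne (congrArg Prod.fst h)
  have h₁ := h.update ((h u).1.update_zero j)
  have h₂ := h₁.update (g := v) (j := k) (b := Q (v, k) + 1) (by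
    rwa [curry_update, update_of_ne huv.ne.symm])
  rw [update_of_ne huv.ne.symm, update_of_ne huk.symm] at h₂
  refine ⟨_, ⟨(u, j), (v, k), .inl huv, hj.ge, by rw [hj]⟩, ?_⟩
  convert h₂ using 3 <;> omega

theorem exists_pebblingReaches [DecidableEq V] [DecidableEq W] [Fintype V] {G : SimpleGraph V}
    {D' : V → ℕ} (h : IsPairPackingOf Q D) (hsize : distSize D ≤ 2 * Fintype.card W)
    (hreach : PebblingReaches G D D') :
    ∃ Q', PebblingReaches (lexProd G ⊤) Q Q' ∧ IsPairPackingOf Q' D' := by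
  induction hreach with
  | refl => exact ⟨Q, .refl, h⟩
  | tail hDD₁ hstep ih =>
    obtain ⟨Q₁, hQQ₁, h₁⟩ := ih
    obtain ⟨Q₂, hstep', h₂⟩ :=
      h₁.exists_pebblingStep ((PebblingReaches.distSize_le hDD₁).trans hsize) hstep
    exact ⟨Q₂, hQQ₁.tail hstep', h₂⟩

theorem kReachable_of_two_le [DecidableEq V] [DecidableEq W] {G : SimpleGraph V}
    (h : IsPairPackingOf Q D) {g : V} (hg : 2 ≤ D g) (i : W) :
    KReachable (lexProd G ⊤) Q 1 (g, i) := by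
  obtain ⟨j, hj : Q (g, j) = 2⟩ := (h g).1.exists_eq_two ((h g).2 ▸ hg)
  rcases eq_or_ne j i with rfl | hji
  · exact ⟨Q, .refl, by omega⟩
  · exact ⟨_, .single ⟨(g, j), (g, i), .inr ⟨rfl, hji⟩, hj.ge, rfl⟩, by simp⟩

theorem kReachable_of_eq_zero [DecidableEq V] [DecidableEq W] [Fintype V] {G : SimpleGraph V}
    (h : IsPairPackingOf Q D) (hsize : distSize D ≤ 2 * Fintype.card W) {g : V} (hg : D g = 0)
    (hreach : KReachable G D 1 g) (i : W) : KReachable (lexProd G ⊤) Q 1 (g, i) := by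
  obtain ⟨D', hDD', hD'⟩ := hreach
  obtain ⟨Q', hQQ', h'⟩ := h.exists_pebblingReaches hsize hDD'
  obtain ⟨k, -, hk⟩ : ∃ k ∈ univ, Q' (g, k) ≠ 0 :=
    exists_ne_zero_of_sum_ne_zero (by rw [(h' g).2]; omega)
  have hcol : ∀ j, Q (g, j) = 0 := fun j => sum_eq_zero_iff.1 ((h g).2.trans hg) j (mem_univ j)
  let σ := lexProdFiberIso G (Function.update (fun _ => .refl) g (.completeGraph (.swap i k)))
  have hσ : Q ∘ σ = Q := by
    ext ⟨x, j⟩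
    rcases eq_or_ne x g with rfl | hx
    · simp [σ, lexProdFiberIso_apply, hcol]
    · simp [σ, lexProdFiberIso_apply, hx]
  have hσi : σ.symm (g, k) = (g, i) := by
    rw [RelIso.symm_apply_eq]
    simp only [σ, lexProdFiberIso_apply, update_self]
    exact Prod.ext rfl (Equiv.swap_apply_left i k).symm
  have hreach : KReachable (lexProd G ⊤) Q 1 (g, k) :=
    .of_pebblingReaches hQQ' ⟨Q', .refl, Nat.one_le_iff_ne_zero.2 hk⟩
  simpa only [hσ, hσi] using hreach.comp_iso σ

end IsPairPackingOf

end Packing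

def pairLift {V : Type*} (D : V → ℕ) (m : ℕ) (p : V × Fin m) : ℕ :=
  if p.2.val = 0 ∧ Odd (D p.1) then 1 else if 1 ≤ p.2.val ∧ p.2.val ≤ D p.1 / 2 then 2 else 0

theorem sum_pairLift {V : Type*} {D : V → ℕ} {m : ℕ} {g : V} (hg : D g < 2 * m) :
    ∑ j, pairLift D m (g, j) = D g := by
  obtain ⟨n, rfl⟩ : ∃ n, m = n + 1 := ⟨m - 1, by omega⟩
  unfold pairLift
  rw [Fin.sum_univ_eq_sum_range (fun j => if j = 0 ∧ Odd (D g) then 1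
    else if 1 ≤ j ∧ j ≤ D g / 2 then 2 else 0), sum_range_succ']
  have hfilter : {i ∈ range n | i < D g / 2} = range (D g / 2) := by
    ext i
    simp only [mem_filter, mem_range]
    omega
  simp only [add_eq_zero, one_ne_zero, and_false, false_and, if_false, le_add_iff_nonneg_left,
    zero_le, true_and, and_true, lt_self_iff_false, Nat.add_one_le_iff, ← sum_filter, hfilter,
    sum_const, card_range, smul_eq_mul]
  split_ifs with hodd
  · have := Nat.odd_iff.1 hodd; omega
  · have := Nat.not_odd_iff.1 hodd; omega

theorem isPairPackingOf_pairLift {V : Type*} {D : V → ℕ} {m : ℕ} (hD : ∀ g, D g < 2 * m) :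
    IsPairPackingOf (pairLift D m) D := by
  refine fun g => ⟨⟨fun j => ?_, fun j k hj hk => ?_⟩, sum_pairLift (hD g)⟩
  · simp only [curry_apply, pairLift]
    split_ifs <;> omega
  · simp only [curry_apply, pairLift] at hj hk
    split_ifs at hj hk <;> omega

theorem lexProd_lift_distribution_general {V : Type*} [Fintype V] [DecidableEq V]
    (G : SimpleGraph V) (m : ℕ) (D : V → ℕ) (hsolv : Solvable G D) (hsize : distSize D ≤ 2 * m)
    (hone : ∀ g, D g = 1 → KReachable G D 2 g) (hlt : ∀ g, D g < 2 * m) :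
    Solvable (lexProd G (⊤ : SimpleGraph (Fin m)))
      (fun p => if p.2.val = 0 ∧ Odd (D p.1) then 1
        else if 1 ≤ p.2.val ∧ p.2.val ≤ D p.1 / 2 then 2 else 0) ∧
    (∀ p : V × Fin m, (fun p : V × Fin m => if p.2.val = 0 ∧ Odd (D p.1) then 1
        else if 1 ≤ p.2.val ∧ p.2.val ≤ D p.1 / 2 then 2 else 0) p ≤ 2) ∧
    distSize (fun p : V × Fin m => if p.2.val = 0 ∧ Odd (D p.1) then 1
        else if 1 ≤ p.2.val ∧ p.2.val ≤ D p.1 / 2 then 2 else 0) = distSize D := by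
  have hQ : IsPairPackingOf (pairLift D m) D := isPairPackingOf_pairLift hlt
  have hsize' : distSize D ≤ 2 * Fintype.card (Fin m) := by rwa [Fintype.card_fin]
  refine ⟨fun ⟨g, i⟩ => ?_, fun p => (hQ p.1).1.1 p.2, hQ.distSize_eq⟩
  obtain h₀ | h₁ | h₂ : D g = 0 ∨ D g = 1 ∨ 2 ≤ D g := by omega
  · exact hQ.kReachable_of_eq_zero hsize' h₀ (hsolv g) i
  · obtain ⟨D', hDD', hD'⟩ := hone g h₁
    obtain ⟨Q', hQQ', h'⟩ := hQ.exists_pebblingReaches hsize' hDD'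
    exact .of_pebblingReaches hQQ' (h'.kReachable_of_two_le hD' i)
  · exact hQ.kReachable_of_two_le h₂ i

theorem lexProd_lift_distribution {V : Type*} [Fintype V] [DecidableEq V]
    (G : SimpleGraph V) (hconn : G.Connected) (hcard : 2 ≤ Fintype.card V)
    (m : ℕ) (D : V → ℕ) (hsolv : Solvable G D) (hsize : distSize D ≤ 2 * m)
    (hone : ∀ g, D g = 1 → KReachable G D 2 g) (hlt : ∀ g, D g < 2 * m) :
    Solvable (lexProd G (⊤ : SimpleGraph (Fin m)))
      (fun p => if p.2.val = 0 ∧ Odd (D p.1) then 1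
        else if 1 ≤ p.2.val ∧ p.2.val ≤ D p.1 / 2 then 2 else 0) ∧
    (∀ p : V × Fin m, (fun p : V × Fin m => if p.2.val = 0 ∧ Odd (D p.1) then 1
        else if 1 ≤ p.2.val ∧ p.2.val ≤ D p.1 / 2 then 2 else 0) p ≤ 2) ∧
    distSize (fun p : V × Fin m => if p.2.val = 0 ∧ Odd (D p.1) then 1
        else if 1 ≤ p.2.val ∧ p.2.val ≤ D p.1 / 2 then 2 else 0) = distSize D :=
  lexProd_lift_distribution_general G m D hsolv hsize hone hlt
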